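/- Let N ≥ 1, D = 3N, δ > 0, and f₁ ∈ L¹_loc(ℝ³). Then for every x = (x_1,…,x_N) ∈ ℝ^D and every r > 0 there is a constant C_N (independent of f₁, x, r) such that Σ_{j=1}^N ∫_{B_r(0) ⊂ ℝ^D} |f₁(y_j + x_j)| / |y|^{D−2+δ} dy ≤ C_N Σ_{j=1}^N ∫_{B_r(x_j) ⊂ ℝ³} |f₁(y)| / |y − x_j|^{1+δ} dy. Consequently, if f₁ ∈ K^{3,δ}_loc, then the function x ↦ Σ_{j=1}^N f₁(x_j) belongs to K^{D,δ}_loc. -/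

import Mathlib

noncomputable section
open MeasureTheory Metric Filter Set
open scoped ENNReal

/-- Three-dimensional Euclidean space. -/
abbrev R3 : Type := EuclideanSpace ℝ (Fin 3)

/-- Configuration space of `N` particles in `ℝ³`, with the Euclidean (L²) norm. -/
abbrev Cfg (N : ℕ) : Type := EuclideanSpace ℝ (Fin N × Fin 3)

/-- The coordinates of the `j`-th particle. -/
def proj {N : ℕ} (j : Fin N) (x : Cfg N) : R3 := WithLp.toLp 2 (fun k => x (j, k))

/-- The quantity `η^K(r; f) = sup_{|x| ≤ R} ∫_{B_r(x)} |f(y)| / |x-y|^p dy`. -/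
def etaK {ι : Type*} [Fintype ι] (p R : ℝ) (f : EuclideanSpace ℝ ι → ℝ) (r : ℝ) : ℝ≥0∞ :=
  ⨆ x : {x : EuclideanSpace ℝ ι // ‖x‖ ≤ R},
    ∫⁻ y in ball (x : EuclideanSpace ℝ ι) r,
      ENNReal.ofReal (|f y| / ‖(x : EuclideanSpace ℝ ι) - y‖ ^ p)

/-- The local Kato class with kernel exponent `p`: `K^n_loc` corresponds to `p = n - 2`,
and `K^{n,δ}_loc` to `p = n - 2 + δ`. -/
def KatoLoc {ι : Type*} [Fintype ι] (p : ℝ) (f : EuclideanSpace ℝ ι → ℝ) : Prop :=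
  ∀ R : ℝ, 0 < R → Tendsto (etaK p R f) (nhdsWithin 0 (Ioi 0)) (nhds 0)

/-! Fix a particle `j` and write `y = (a, b)` with `a = y_j ∈ ℝ³` and `b ∈ ℝ^{3N-3}` the other
coordinates. On `|y| < r` also `|a| < r`, and the substitution `b = |a| c` gives
`∫ (|a|² + |b|²)^{-q/2} db = |a|^{3N-3-q} ∫ (1 + |c|²)^{-q/2} dc`. For `q = 3N - 2 + δ` the power
of `|a|` is `-(1 + δ)`, and the constant is finite because `q > 3N - 3`. Summing over `j` gives
the inequality; taking the supremum over `|x| ≤ R` (where `|x_j| ≤ |x| ≤ R`) bounds `η` for the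
lifted function by `C N η(f₁)`, which tends to `0` with `r`. -/

open Module

def bracketConst (d : ℕ) (q : ℝ) : ℝ≥0∞ :=
  ∫⁻ c : EuclideanSpace ℝ (Fin d), ENNReal.ofReal ((1 + ‖c‖ ^ 2) ^ (-(q / 2)))

lemma bracketConst_lt_top {d : ℕ} {q : ℝ} (hq : (d : ℝ) < q) : bracketConst d q < ∞ := by
  have := (integrable_rpow_neg_one_add_norm_sq
    (μ := (volume : Measure (EuclideanSpace ℝ (Fin d))))
    (by rwa [finrank_euclideanSpace_fin])).lintegral_lt_top
  simpa [bracketConst, neg_div] using this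

lemma Real.rpow_neg_eq_sq_rpow {t : ℝ} (ht : 0 ≤ t) (q : ℝ) :
    t ^ (-q) = (t ^ 2) ^ (-(q / 2)) := by
  rw [← Real.rpow_natCast, ← Real.rpow_mul ht]
  ring_nf

lemma lintegral_eq_mul_lintegral_comp_smul {E : Type*} [NormedAddCommGroup E] [NormedSpace ℝ E]
    [MeasurableSpace E] [BorelSpace E] [FiniteDimensional ℝ E] (μ : Measure E) [μ.IsAddHaarMeasure]
    (f : E → ℝ≥0∞) {a : ℝ} (ha : 0 < a) :
    ∫⁻ x, f x ∂μ = ENNReal.ofReal (a ^ finrank ℝ E) * ∫⁻ x, f (a • x) ∂μ := by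
  have hpos : 0 < a ^ finrank ℝ E := pow_pos ha _
  have hsmul : ∫⁻ x, f (a • x) ∂μ = ENNReal.ofReal (a ^ finrank ℝ E)⁻¹ * ∫⁻ x, f x ∂μ := by
    rw [← abs_of_pos (inv_pos.2 hpos), ← smul_eq_mul, ← lintegral_smul_measure,
      ← Measure.map_addHaar_smul μ ha.ne']
    exact (lintegral_map_equiv f (Homeomorph.smulOfNeZero a ha.ne').toMeasurableEquiv).symm
  rw [hsmul, ← mul_assoc, ← ENNReal.ofReal_mul hpos.le, mul_inv_cancel₀ hpos.ne',
    ENNReal.ofReal_one, one_mul]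

lemma ENNReal.ofReal_div_rpow {s t : ℝ} (hs : 0 ≤ s) (ht : 0 ≤ t) (q : ℝ) :
    ENNReal.ofReal (s / t ^ q) = ENNReal.ofReal s * ENNReal.ofReal (t ^ (-q)) := by
  rw [Real.rpow_neg ht, div_eq_mul_inv, ENNReal.ofReal_mul hs]

lemma setLIntegral_ball_eq_setLIntegral_ball_zero {G : Type*} [NormedAddCommGroup G]
    [MeasurableSpace G] [BorelSpace G] (μ : Measure G) [μ.IsAddRightInvariant]
    (h : G → ℝ≥0∞) (c : G) (r : ℝ) :
    ∫⁻ z in ball c r, h z ∂μ = ∫⁻ a in ball 0 r, h (a + c) ∂μ := by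
  have hpre : (· + c) ⁻¹' ball c r = ball (0 : G) r := by
    ext a
    simp [mem_ball, dist_eq_norm]
  rw [← hpre, (measurePreserving_add_right μ c).setLIntegral_comp_preimage_emb
    (MeasurableEquiv.addRight c).measurableEmbedding]

section Bracket

variable {F : Type*} [NormedAddCommGroup F] [InnerProductSpace ℝ F] [FiniteDimensional ℝ F]
  [MeasurableSpace F] [BorelSpace F]

lemma lintegral_one_add_norm_sq_rpow (q : ℝ) :
    ∫⁻ c : F, ENNReal.ofReal ((1 + ‖c‖ ^ 2) ^ (-(q / 2))) = bracketConst (finrank ℝ F) q := by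
  let e := (stdOrthonormalBasis ℝ F).repr
  rw [bracketConst,
    ← e.measurePreserving.lintegral_comp_emb e.toMeasurableEquiv.measurableEmbedding]
  simp only [LinearIsometryEquiv.norm_map]

lemma lintegral_sq_add_norm_sq_rpow {a : ℝ} (ha : 0 < a) (q : ℝ) :
    ∫⁻ b : F, ENNReal.ofReal ((a ^ 2 + ‖b‖ ^ 2) ^ (-(q / 2)))
      = ENNReal.ofReal (a ^ ((finrank ℝ F : ℝ) - q)) * bracketConst (finrank ℝ F) q := by
  have hscale (c : F) : (a ^ 2 + ‖a • c‖ ^ 2) ^ (-(q / 2))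
      = a ^ (-q) * (1 + ‖c‖ ^ 2) ^ (-(q / 2)) := by
    rw [norm_smul, Real.norm_of_nonneg ha.le, Real.rpow_neg_eq_sq_rpow ha.le,
      ← Real.mul_rpow (by positivity) (by positivity)]
    ring_nf
  rw [lintegral_eq_mul_lintegral_comp_smul volume _ ha, ← lintegral_one_add_norm_sq_rpow]
  simp_rw [hscale, ENNReal.ofReal_mul (Real.rpow_nonneg ha.le _)]
  rw [lintegral_const_mul' _ _ ENNReal.ofReal_ne_top, ← mul_assoc,
    ← ENNReal.ofReal_mul (by positivity), ← Real.rpow_natCast, ← Real.rpow_add ha, sub_eq_add_neg]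

lemma lintegral_prod_mul_rpow_le {U : Type*} [NormedAddCommGroup U] [MeasurableSpace U]
    (μ : Measure U) [NullSingletonClass μ] (g : U → ℝ≥0∞) {q : ℝ}
    (hq : (finrank ℝ F : ℝ) < q) :
    ∫⁻ p : U × F, g p.1 * ENNReal.ofReal ((‖p.1‖ ^ 2 + ‖p.2‖ ^ 2) ^ (-(q / 2))) ∂μ.prod volume
      ≤ bracketConst (finrank ℝ F) q
        * ∫⁻ a, g a * ENNReal.ofReal (‖a‖ ^ ((finrank ℝ F : ℝ) - q)) ∂μ := by
  calc _ ≤ ∫⁻ a, ∫⁻ b : F, g a * ENNReal.ofReal ((‖a‖ ^ 2 + ‖b‖ ^ 2) ^ (-(q / 2))) ∂volume ∂μ :=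
        lintegral_prod_le _
    _ = ∫⁻ a, g a * (ENNReal.ofReal (‖a‖ ^ ((finrank ℝ F : ℝ) - q))
          * bracketConst (finrank ℝ F) q) ∂μ := by
        refine lintegral_congr_ae ?_
        filter_upwards [Measure.ae_ne μ 0] with a ha
        rw [lintegral_const_mul _ (by fun_prop),
          lintegral_sq_add_norm_sq_rpow (norm_pos_iff.2 ha)]
    _ = _ := by
        rw [mul_comm, ← lintegral_mul_const' _ _ (bracketConst_lt_top hq).ne]
        simp only [mul_assoc]

lemma setLIntegral_ball_comp_fst_le {U : Type*} [NormedAddCommGroup U] [InnerProductSpace ℝ U]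
    [FiniteDimensional ℝ U] [Nontrivial U] [MeasurableSpace U] [BorelSpace U] (g : U → ℝ≥0∞)
    {q : ℝ} (hq : (finrank ℝ F : ℝ) < q) (r : ℝ) :
    ∫⁻ w : WithLp 2 (U × F) in ball 0 r, g w.fst * ENNReal.ofReal (‖w‖ ^ (-q))
      ≤ bracketConst (finrank ℝ F) q
        * ∫⁻ a in ball 0 r, g a * ENNReal.ofReal (‖a‖ ^ ((finrank ℝ F : ℝ) - q)) := by
  rw [← lintegral_indicator measurableSet_ball, ← lintegral_indicator measurableSet_ball,
    ← (WithLp.volume_preserving_toLp U F).lintegral_comp_emb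
      (MeasurableEquiv.toLp 2 (U × F)).measurableEmbedding, Measure.volume_eq_prod]
  simp only [indicator_mul_left]
  refine le_trans (lintegral_mono fun p => ?_) (lintegral_prod_mul_rpow_le volume _ hq)
  have hnorm : ‖WithLp.toLp 2 p‖ ^ (-q) = (‖p.1‖ ^ 2 + ‖p.2‖ ^ 2) ^ (-(q / 2)) := by
    rw [Real.rpow_neg_eq_sq_rpow (norm_nonneg _), WithLp.prod_norm_sq_eq_of_L2]
    rfl
  by_cases hp : WithLp.toLp 2 p ∈ ball 0 r
  · have hp1 : p.1 ∈ ball 0 r := mem_ball_zero_iff.2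
      ((WithLp.norm_fst_le (x := WithLp.toLp 2 p)).trans_lt (mem_ball_zero_iff.1 hp))
    simp only [indicator_of_mem hp, indicator_of_mem hp1, hnorm]
    rfl
  · simp only [indicator_of_notMem hp, zero_mul, zero_le]

end Bracket

section Configuration
variable {N : ℕ}

def particleCoordEquiv (j : Fin N) : {i : Fin N × Fin 3 // i.1 = j} ≃ Fin 3 where
  toFun i := i.1.2
  invFun k := ⟨(j, k), rfl⟩
  left_inv := by rintro ⟨⟨_, _⟩, rfl⟩; rfl
  right_inv _ := rfl

abbrev OtherCoords (j : Fin N) : Type := EuclideanSpace ℝ {i : Fin N × Fin 3 // ¬ i.1 = j}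

def particleSplit (j : Fin N) : Cfg N ≃ₗᵢ[ℝ] WithLp 2 (R3 × OtherCoords j) :=
  (LinearIsometryEquiv.piLpCongrLeft 2 ℝ ℝ
      (Equiv.sumCompl fun i : Fin N × Fin 3 => i.1 = j).symm).trans <|
    (PiLp.sumPiLpEquivProdLpPiLp (𝕜 := ℝ) 2 fun _ => ℝ).trans <|
    LinearIsometryEquiv.withLpProdCongr 2
      (LinearIsometryEquiv.piLpCongrLeft 2 ℝ ℝ (particleCoordEquiv j))
      (LinearIsometryEquiv.refl ℝ _)

lemma particleSplit_fst (j : Fin N) (y : Cfg N) : (particleSplit j y).fst = proj j y := by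
  ext k
  simp [particleSplit, proj, particleCoordEquiv, WithLp.fst,
    PiLp.sumPiLpEquivProdLpPiLp_apply_ofLp, LinearIsometryEquiv.piLpCongrLeft_apply]

lemma finrank_otherCoords (j : Fin N) : finrank ℝ (OtherCoords j) = 3 * N - 3 := by
  rw [finrank_euclideanSpace, Fintype.card_subtype_compl,
    Fintype.card_congr (particleCoordEquiv j)]
  simp [mul_comm]

lemma norm_proj_le (j : Fin N) (x : Cfg N) : ‖proj j x‖ ≤ ‖x‖ := by
  simpa only [particleSplit_fst, LinearIsometryEquiv.norm_map] using
    WithLp.norm_fst_le (x := particleSplit j x)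

lemma quasiMeasurePreserving_proj (j : Fin N) :
    Measure.QuasiMeasurePreserving (proj j) (volume : Measure (Cfg N)) volume := by
  have h := ((WithLp.volume_preserving_ofLp R3 (OtherCoords j)).comp
    (particleSplit j).measurePreserving).quasiMeasurePreserving
  rw [Measure.volume_eq_prod] at h
  have hproj : proj j = fun y => (particleSplit j y).fst :=
    funext fun y => (particleSplit_fst j y).symm
  rw [hproj]
  exact Measure.quasiMeasurePreserving_fst.comp h

lemma setLIntegral_ball_comp_proj_le (j : Fin N) (g : R3 → ℝ≥0∞) {q : ℝ}
    (hq : ((3 * N - 3 : ℕ) : ℝ) < q) (r : ℝ) :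
    ∫⁻ y in ball (0 : Cfg N) r, g (proj j y) * ENNReal.ofReal (‖y‖ ^ (-q))
      ≤ bracketConst (3 * N - 3) q
        * ∫⁻ a in ball (0 : R3) r, g a * ENNReal.ofReal (‖a‖ ^ (((3 * N - 3 : ℕ) : ℝ) - q)) := by
  rw [← finrank_otherCoords j] at hq ⊢
  have hball : particleSplit j ⁻¹' ball 0 r = ball 0 r := by
    ext y
    simp
  calc _ = ∫⁻ w : WithLp 2 (R3 × OtherCoords j) in ball 0 r,
        g w.fst * ENNReal.ofReal (‖w‖ ^ (-q)) := by
        rw [← hball, ← (particleSplit j).measurePreserving.setLIntegral_comp_preimage_emb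
          (particleSplit j).toMeasurableEquiv.measurableEmbedding]
        simp only [particleSplit_fst, LinearIsometryEquiv.norm_map]
    _ ≤ _ := setLIntegral_ball_comp_fst_le g hq r

lemma setLIntegral_ball_lift_le (j : Fin N) {δ : ℝ} (hδ : -1 < δ) (f : R3 → ℝ) (x : Cfg N)
    (r : ℝ) :
    ∫⁻ y in ball (0 : Cfg N) r,
        ENNReal.ofReal (|f (proj j y + proj j x)| / ‖y‖ ^ ((3 * N : ℝ) - 2 + δ))
      ≤ bracketConst (3 * N - 3) ((3 * N : ℝ) - 2 + δ)
        * ∫⁻ z in ball (proj j x) r, ENNReal.ofReal (|f z| / ‖z - proj j x‖ ^ (1 + δ)) := by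
  have hcast : ((3 * N - 3 : ℕ) : ℝ) = 3 * N - 3 := by
    have : 3 ≤ 3 * N := by have := j.pos; omega
    push_cast [Nat.cast_sub this]
    ring
  have hexp : ((3 * N - 3 : ℕ) : ℝ) - ((3 * N : ℝ) - 2 + δ) = -(1 + δ) := by
    rw [hcast]
    ring
  have hlift := setLIntegral_ball_comp_proj_le j (fun a => ENNReal.ofReal |f (a + proj j x)|)
    (q := (3 * N : ℝ) - 2 + δ) (by rw [hcast]; linarith) r
  rw [hexp] at hlift
  rw [setLIntegral_ball_eq_setLIntegral_ball_zero volume _ (proj j x)]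
  simpa only [ENNReal.ofReal_div_rpow (abs_nonneg _) (norm_nonneg _), add_sub_cancel_right]
    using hlift

lemma setLIntegral_ball_sum_comp_proj_le {f : R3 → ℝ} (hf : AEMeasurable f) (q : ℝ) (x : Cfg N)
    (r : ℝ) :
    ∫⁻ y in ball x r, ENNReal.ofReal (|∑ j, f (proj j y)| / ‖x - y‖ ^ q)
      ≤ ∑ j, ∫⁻ y in ball (0 : Cfg N) r,
          ENNReal.ofReal (|f (proj j y + proj j x)| / ‖y‖ ^ q) := by
  have hmeas (j : Fin N) : AEMeasurable (fun y => f (proj j y)) (volume.restrict (ball x r)) :=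
    (hf.comp_quasiMeasurePreserving (quasiMeasurePreserving_proj j)).restrict
  calc _ ≤ ∫⁻ y in ball x r, ∑ j, ENNReal.ofReal (|f (proj j y)| / ‖x - y‖ ^ q) := by
        refine lintegral_mono fun y => ?_
        rw [← ENNReal.ofReal_sum_of_nonneg fun j _ => by positivity, ← Finset.sum_div]
        exact ENNReal.ofReal_le_ofReal (div_le_div_of_nonneg_right
          (Finset.abs_sum_le_sum_abs _ _) (by positivity))
    _ = ∑ j, ∫⁻ y in ball x r, ENNReal.ofReal (|f (proj j y)| / ‖x - y‖ ^ q) :=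
        lintegral_finsetSum' _ fun j _ => ((hmeas j).abs.div (by fun_prop)).ennreal_ofReal
    _ = _ := by
        refine Finset.sum_congr rfl fun j _ => ?_
        rw [setLIntegral_ball_eq_setLIntegral_ball_zero]
        simp only [show ∀ w, proj j (w + x) = proj j w + proj j x from fun _ => rfl,
          sub_add_cancel_right, norm_neg]

end Configuration

lemma KatoLoc.of_etaK_le {ι κ : Type*} [Fintype ι] [Fintype κ] {p p' : ℝ}
    {f : EuclideanSpace ℝ ι → ℝ} {g : EuclideanSpace ℝ κ → ℝ} {c : ℝ≥0∞} (hc : c ≠ ∞)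
    (hf : KatoLoc p' f) (hle : ∀ R r : ℝ, 0 < r → etaK p R g r ≤ c * etaK p' R f r) :
    KatoLoc p g := by
  intro R hR
  have hlim : Tendsto (fun r => c * etaK p' R f r) (nhdsWithin 0 (Ioi 0)) (nhds 0) := by
    simpa using ENNReal.Tendsto.const_mul (hf R hR) (Or.inr hc)
  exact tendsto_of_tendsto_of_tendsto_of_le_of_le' tendsto_const_nhds hlim
    (Eventually.of_forall fun r => zero_le)
    (eventually_mem_nhdsWithin.mono fun r hr => hle R r hr)

lemma etaK_sum_comp_proj_le {N : ℕ} {f : R3 → ℝ} (hf : AEMeasurable f) {p q r : ℝ} {C : ℝ≥0∞}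
    (hlift : ∀ x : Cfg N,
      (∑ j, ∫⁻ y in ball (0 : Cfg N) r, ENNReal.ofReal (|f (proj j y + proj j x)| / ‖y‖ ^ q))
        ≤ C * ∑ j, ∫⁻ z in ball (proj j x) r, ENNReal.ofReal (|f z| / ‖z - proj j x‖ ^ p))
    (R : ℝ) :
    etaK q R (fun x : Cfg N => ∑ j, f (proj j x)) r ≤ C * N * etaK p R f r := by
  refine iSup_le fun ⟨x, hx⟩ => ?_
  have hterm (j : Fin N) :
      ∫⁻ z in ball (proj j x) r, ENNReal.ofReal (|f z| / ‖z - proj j x‖ ^ p) ≤ etaK p R f r := by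
    simp only [norm_sub_rev _ (proj j x)]
    exact le_iSup (fun z : {z : R3 // ‖z‖ ≤ R} => ∫⁻ y in ball (z : R3) r,
      ENNReal.ofReal (|f y| / ‖(z : R3) - y‖ ^ p)) ⟨proj j x, (norm_proj_le j x).trans hx⟩
  calc _ ≤ _ := setLIntegral_ball_sum_comp_proj_le hf q x r
    _ ≤ _ := hlift x
    _ ≤ C * ∑ _j : Fin N, etaK p R f r := by gcongr with j; exact hterm j
    _ = C * N * etaK p R f r := by simp [mul_assoc]

/-- **One-body Kato-class lifting** (inequality (14) in the proof of Corollary 2): the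
integral of `∑ⱼ |f₁(yⱼ + xⱼ)|/|y|^{D-2+δ}` over `B_r(0) ⊆ ℝ^D` is controlled by a constant
(depending only on `N`, `δ`) times `∑ⱼ ∫_{B_r(xⱼ)} |f₁(y)|/|y - xⱼ|^{1+δ} dy`; consequently
`f₁ ∈ K^{3,δ}_loc` implies `x ↦ ∑ⱼ f₁(xⱼ) ∈ K^{D,δ}_loc`. -/
theorem one_body_kato_lifting (N : ℕ) (hN : 1 ≤ N) (δ : ℝ) (hδ : 0 < δ) :
    (∃ C : ℝ, 0 < C ∧ ∀ f1 : R3 → ℝ, LocallyIntegrable f1 volume →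
      ∀ x : Cfg N, ∀ r : ℝ, 0 < r →
        (∑ j : Fin N, ∫⁻ y in ball (0 : Cfg N) r,
            ENNReal.ofReal (|f1 (proj j y + proj j x)| / ‖y‖ ^ ((3 * N : ℝ) - 2 + δ)))
          ≤ ENNReal.ofReal C *
            ∑ j : Fin N, ∫⁻ z in ball (proj j x) r,
              ENNReal.ofReal (|f1 z| / ‖z - proj j x‖ ^ (1 + δ)))
    ∧ ∀ f1 : R3 → ℝ, LocallyIntegrable f1 volume → KatoLoc (1 + δ) f1 →
        KatoLoc ((3 * N : ℝ) - 2 + δ) (fun x : Cfg N => ∑ j, f1 (proj j x)) := by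
  set K := bracketConst (3 * N - 3) ((3 * N : ℝ) - 2 + δ)
  have hK : K ≠ ∞ := (bracketConst_lt_top (by
    push_cast [Nat.cast_sub (by omega : 3 ≤ 3 * N)]
    linarith)).ne
  have hlift (f : R3 → ℝ) (x : Cfg N) (r : ℝ) :
      (∑ j, ∫⁻ y in ball (0 : Cfg N) r,
          ENNReal.ofReal (|f (proj j y + proj j x)| / ‖y‖ ^ ((3 * N : ℝ) - 2 + δ)))
        ≤ K * ∑ j, ∫⁻ z in ball (proj j x) r,
            ENNReal.ofReal (|f z| / ‖z - proj j x‖ ^ (1 + δ)) := by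
    rw [Finset.mul_sum]
    exact Finset.sum_le_sum fun j _ => setLIntegral_ball_lift_le j (by linarith) f x r
  have hKC : K ≤ ENNReal.ofReal (K.toReal + 1) := by
    rw [← ENNReal.ofReal_toReal hK]
    exact ENNReal.ofReal_le_ofReal (by simp)
  refine ⟨⟨K.toReal + 1, by positivity,
    fun f _ x r _ => (hlift f x r).trans (mul_le_mul_left hKC _)⟩, fun f hf hKato => ?_⟩
  exact KatoLoc.of_etaK_le (ENNReal.mul_ne_top hK (ENNReal.natCast_ne_top N)) hKato
    fun R r _ => etaK_sum_comp_proj_le hf.aestronglyMeasurable.aemeasurable (hlift f · r) R
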